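/- arXiv:1012.4049 — 6 statements merged into one kernel-verified Lean document; each statement's English description precedes it below -/
import Mathlib

section
/- Let s ≥ 2 be an integer and define integers n₁ = 2s−3, nₛ = 3−2s, and nᵢ = 2s+2−4i for 2 ≤ i ≤ s−1. Then in SL(2,ℤ) the product ∏_{i=1}^{s} X₁^{−nᵢ}·X₂·X₁^{nᵢ}, taken with the factors in increasing order of i from left to right, equals (−1)^{s+1}·X₁^{6−5s}. (In particular this product is, up to sign, a power of X₁, which is why this sequence T_s serves as a Hurwitz system of a genus-1 simplified broken Lefschetz fibration.) -/
/-- `SL(2,ℤ)`. -/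
abbrev SL2Z := Matrix.SpecialLinearGroup (Fin 2) ℤ

/-- The matrix `X₁` with rows `(1,0),(1,1)`. -/
def X1 : SL2Z := ⟨!![1, 0; 1, 1], by norm_num [Matrix.det_fin_two_of]⟩

/-- The matrix `X₂` with rows `(1,-1),(0,1)`. -/
def X2 : SL2Z := ⟨!![1, -1; 0, 1], by norm_num [Matrix.det_fin_two_of]⟩

/-- `-E`, the negative of the identity matrix, as an element of `SL(2,ℤ)`. -/
def negE : SL2Z := ⟨!![-1, 0; 0, -1], by norm_num [Matrix.det_fin_two_of]⟩

/-!
Write `X₂ = X₁⁻¹ S X₁⁻¹` with `S = [[0,-1],[1,0]]`, so that the `i`-th factor is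
`X₁^(-nᵢ-1) S X₁^(nᵢ-1)`. For `k < s` the product of the first `k` factors is
`±X₁^(3-2s-k) S X₁^(2s-4k)`: the exponents are chosen so that each new factor meets the previous
`S` in `S X₁ S`, which the braid relation `S X₁ S = -X₁⁻¹ S X₁⁻¹` turns back into a single `S`.
The last factor meets it in `S S = -1`, leaving `±X₁^(6-5s)`.
-/

open ModularGroup

lemma negE_eq_neg_one : negE = -1 := by decide

lemma X2_eq_X1_inv_mul_S_mul_X1_inv : X2 = X1⁻¹ * S * X1⁻¹ := by decide

lemma S_mul_X1_mul_S : S * X1 * S = -(X1⁻¹ * S * X1⁻¹) := by decide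

lemma S_mul_S : S * S = -1 := by decide

lemma X1_zpow_neg_mul_X2_mul_X1_zpow (m : ℤ) :
    X1 ^ (-m) * X2 * X1 ^ m = X1 ^ (-m - 1) * S * X1 ^ (m - 1) := by
  rw [X2_eq_X1_inv_mul_S_mul_X1_inv]
  group

lemma X1_zpow_S_X1_zpow_mul_X1_zpow_S_X1_zpow_of_add_eq_one {a b c d : ℤ} (h : b + c = 1) :
    X1 ^ a * S * X1 ^ b * (X1 ^ c * S * X1 ^ d) = -(X1 ^ (a - 1) * S * X1 ^ (d - 1)) :=
  calc X1 ^ a * S * X1 ^ b * (X1 ^ c * S * X1 ^ d)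
      = X1 ^ a * (S * X1 ^ (b + c) * S) * X1 ^ d := by group
    _ = X1 ^ a * -(X1⁻¹ * S * X1⁻¹) * X1 ^ d := by rw [h, zpow_one, S_mul_X1_mul_S]
    _ = -(X1 ^ (a - 1) * S * X1 ^ (d - 1)) := by rw [mul_neg, neg_mul]; group

lemma X1_zpow_S_X1_zpow_mul_X1_zpow_S_X1_zpow_of_add_eq_zero {a b c d : ℤ} (h : b + c = 0) :
    X1 ^ a * S * X1 ^ b * (X1 ^ c * S * X1 ^ d) = -X1 ^ (a + d) :=
  calc X1 ^ a * S * X1 ^ b * (X1 ^ c * S * X1 ^ d)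
      = X1 ^ a * (S * X1 ^ (b + c) * S) * X1 ^ d := by group
    _ = -X1 ^ (a + d) := by
      rw [h, zpow_zero, mul_one, S_mul_S, mul_neg_one, neg_mul, ← zpow_add]

lemma prod_range_conj_X2_of_le (s : ℕ) (n : ℕ → ℤ) (h1 : n 1 = 2 * s - 3)
    (hmid : ∀ i : ℕ, 2 ≤ i → i ≤ s - 1 → n i = 2 * s + 2 - 4 * i) {k : ℕ} (hk : 1 ≤ k)
    (hks : k ≤ s - 1) :
    ((List.range k).map (fun j => X1 ^ (-(n (j + 1))) * X2 * X1 ^ (n (j + 1)))).prod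
      = (-1) ^ (k + 1) * (X1 ^ (3 - 2 * (s : ℤ) - k) * S * X1 ^ (2 * (s : ℤ) - 4 * k)) := by
  induction k, hk using Nat.le_induction with
  | base =>
    rw [List.range_one, List.map_singleton, List.prod_singleton,
      X1_zpow_neg_mul_X2_mul_X1_zpow, h1, neg_one_pow_two, one_mul]
    ring_nf
  | succ k hk ih =>
    rw [List.range_succ, List.map_append, List.prod_append, ih (by omega), List.map_singleton,
      List.prod_singleton, X1_zpow_neg_mul_X2_mul_X1_zpow, hmid (k + 1) (by omega) (by omega),
      mul_assoc, X1_zpow_S_X1_zpow_mul_X1_zpow_S_X1_zpow_of_add_eq_one (by push_cast; ring),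
      mul_neg, pow_succ (-1 : SL2Z) (k + 1), mul_neg_one, neg_mul]
    push_cast
    ring_nf

/-- for `s ≥ 2` and the exponents `n₁ = 2s-3`, `nₛ = 3-2s`,
`nᵢ = 2s+2-4i` for `2 ≤ i ≤ s-1`, the ordered product
`∏_{i=1}^{s} X₁^{-nᵢ} X₂ X₁^{nᵢ}` equals `(-1)^{s+1} X₁^{6-5s}`. -/
theorem product_of_Ts (s : ℕ) (hs : 2 ≤ s) (n : ℕ → ℤ)
    (h1 : n 1 = 2 * s - 3)
    (hlast : n s = 3 - 2 * s)
    (hmid : ∀ i : ℕ, 2 ≤ i → i ≤ s - 1 → n i = 2 * s + 2 - 4 * i) :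
    ((List.range s).map (fun j => X1 ^ (-(n (j + 1))) * X2 * X1 ^ (n (j + 1)))).prod
      = negE ^ (s + 1) * X1 ^ (6 - 5 * (s : ℤ)) := by
  obtain ⟨t, rfl⟩ : ∃ t, s = t + 1 := ⟨s - 1, by omega⟩
  rw [List.range_succ, List.map_append, List.prod_append,
    prod_range_conj_X2_of_le (t + 1) n h1 hmid (by omega) (by omega), List.map_singleton,
    List.prod_singleton, X1_zpow_neg_mul_X2_mul_X1_zpow, hlast, mul_assoc,
    X1_zpow_S_X1_zpow_mul_X1_zpow_S_X1_zpow_of_add_eq_zero (by push_cast; ring),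
    negE_eq_neg_one, mul_neg, pow_succ (-1 : SL2Z) (t + 1), mul_neg_one, neg_mul]
  push_cast
  ring_nf
end

section
/- For an integer s ≥ 2 let w(s) denote the product ∏_{i=1}^{s} X₁^{−nᵢ}·X₂·X₁^{nᵢ} in SL(2,ℤ), where n₁ = 2s−3, nₛ = 3−2s, and nᵢ = 2s+2−4i for 2 ≤ i ≤ s−1, with factors in increasing order of i. Then for every integer s ≥ 4 one has the recursion w(s) = X₁⁻⁵ · w(s−2) · X₁⁻⁵. -/
/-- The exponent sequence of `T_s`: `n₁ = 2s-3`, `nₛ = 3-2s`, and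
`nᵢ = 2s+2-4i` for the intermediate indices. -/
def nseq (s i : ℕ) : ℤ :=
  if i = 1 then 2 * s - 3 else if i = s then 3 - 2 * s else 2 * s + 2 - 4 * i

/-- The product `w(s) = ∏_{i=1}^{s} X₁^{-nᵢ} X₂ X₁^{nᵢ}` in `SL(2,ℤ)`,
with factors in increasing order of `i`. -/
def w (s : ℕ) : SL2Z :=
  ((List.range s).map (fun j => X1 ^ (-(nseq s (j + 1))) * X2 * X1 ^ (nseq s (j + 1)))).prod

/-!
With `S = X₁X₂X₁ = [[0,-1],[1,0]]`, consecutive exponents `nᵢ` differ by `4` (by `3` at the two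
ends), and the relation `S X₁² X₂ = -X₁⁻¹ S X₁⁻²` lets the partial products telescope: the product
of the first `k < s` factors is `(-1)^(k+1) X₁^(-(2s+k-3)) S X₁^(2s-4k)`. The last factor and
`S X₁ X₂ = -X₁⁻¹` then give the closed form `w(s) = (-1)^(s+1) X₁^(6-5s)`, and the recursion
follows because `-1` is central.
-/

open Matrix.SpecialLinearGroup ModularGroup

lemma coe_X1 : (X1 : Matrix (Fin 2) (Fin 2) ℤ) = !![1, 0; 1, 1] := rfl

lemma coe_X2 : (X2 : Matrix (Fin 2) (Fin 2) ℤ) = !![1, -1; 0, 1] := rfl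

lemma coe_X1_zpow (n : ℤ) : ((X1 ^ n : SL2Z) : Matrix (Fin 2) (Fin 2) ℤ) = !![1, 0; n, 1] := by
  induction n using Int.induction_on with
  | zero => simp [Matrix.one_fin_two]
  | succ k ih =>
    rw [zpow_add_one, coe_mul, ih, coe_X1]
    simp
  | pred k ih =>
    rw [zpow_sub_one, coe_mul, ih, coe_inv, coe_X1, Matrix.adjugate_fin_two_of]
    simp [sub_eq_add_neg]

lemma X1_mul_X2_mul_X1 : X1 * X2 * X1 = S := by
  ext i j
  simp only [coe_mul, coe_X1, coe_X2, coe_S]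
  fin_cases i <;> fin_cases j <;> rfl

lemma S_mul_X1_sq_mul_X2 : S * X1 ^ (2 : ℤ) * X2 = -(X1⁻¹ * S * X1 ^ (-2 : ℤ)) := by
  rw [← zpow_neg_one]
  ext i j
  simp only [coe_mul, coe_neg, coe_X1_zpow, coe_X2, coe_S]
  fin_cases i <;> fin_cases j <;> rfl

lemma S_mul_X1_mul_X2 : S * X1 * X2 = -X1⁻¹ := by
  rw [← zpow_neg_one]
  ext i j
  simp only [coe_mul, coe_neg, coe_X1, coe_X1_zpow, coe_X2, coe_S]
  fin_cases i <;> fin_cases j <;> rfl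

lemma nseq_one (s : ℕ) : nseq s 1 = 2 * s - 3 := if_pos rfl

lemma nseq_self {s : ℕ} (hs : s ≠ 1) : nseq s s = 3 - 2 * s := by
  simp [nseq, hs]

lemma nseq_of_ne {s i : ℕ} (h1 : i ≠ 1) (hs : i ≠ s) : nseq s i = 2 * s + 2 - 4 * i := by
  simp [nseq, h1, hs]

def twistConj (n : ℤ) : SL2Z := X1 ^ (-n) * X2 * X1 ^ n

def wPartial (s k : ℕ) : SL2Z := ((List.range k).map fun j => twistConj (nseq s (j + 1))).prod

lemma w_eq_wPartial (s : ℕ) : w s = wPartial s s := rfl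

lemma wPartial_zero (s : ℕ) : wPartial s 0 = 1 := rfl

lemma wPartial_succ (s k : ℕ) :
    wPartial s (k + 1) = wPartial s k * twistConj (nseq s (k + 1)) := by
  simp [wPartial, List.range_succ]

lemma wPartial_eq_neg_one_pow_mul {s k : ℕ} (hk : 1 ≤ k) (hks : k < s) :
    wPartial s k =
      (-1) ^ (k + 1) * (X1 ^ (-(2 * s + k - 3 : ℤ)) * S * X1 ^ (2 * s - 4 * k : ℤ)) := by
  induction k, hk using Nat.le_induction with
  | base =>
    rw [wPartial_succ, wPartial_zero, one_mul, nseq_one, twistConj, one_add_one_eq_two,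
      neg_one_sq, one_mul, ← X1_mul_X2_mul_X1]
    group
  | succ k hk ih =>
    rw [wPartial_succ, ih (by omega), nseq_of_ne (by omega) (by omega), twistConj, mul_assoc]
    calc
      _ = (-1) ^ (k + 1) * (X1 ^ (-(2 * s + k - 3 : ℤ)) * (S * X1 ^ (2 : ℤ) * X2) *
            X1 ^ (2 * s + 2 - 4 * (k + 1 : ℕ) : ℤ)) := by
        congr 1
        push_cast
        group
      _ = _ := by
        rw [S_mul_X1_sq_mul_X2, pow_succ _ (k + 1), mul_neg_one]
        simp only [mul_neg, neg_mul]
        congr 2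
        push_cast
        group

lemma w_eq_neg_one_pow_mul_X1_zpow {s : ℕ} (hs : 2 ≤ s) :
    w s = (-1) ^ (s + 1) * X1 ^ (6 - 5 * s : ℤ) := by
  obtain ⟨k, rfl⟩ : ∃ k, s = k + 1 := ⟨s - 1, by omega⟩
  rw [w_eq_wPartial, wPartial_succ, wPartial_eq_neg_one_pow_mul (by omega) (by omega),
    nseq_self (by omega), twistConj, mul_assoc]
  calc
    _ = (-1) ^ (k + 1) * (X1 ^ (-(2 * (k + 1 : ℕ) + k - 3 : ℤ)) * (S * X1 * X2) *
          X1 ^ (3 - 2 * (k + 1 : ℕ) : ℤ)) := by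
      congr 1
      push_cast
      group
    _ = _ := by
      rw [S_mul_X1_mul_X2, pow_succ _ (k + 1), mul_neg_one]
      simp only [mul_neg, neg_mul]
      congr 2
      push_cast
      group

/-- for every integer `s ≥ 4`, `w(s) = X₁⁻⁵ ⬝ w(s-2) ⬝ X₁⁻⁵`. -/
theorem w_recursion (s : ℕ) (hs : 4 ≤ s) :
    w s = X1 ^ (-5 : ℤ) * w (s - 2) * X1 ^ (-5 : ℤ) := by
  obtain ⟨t, rfl⟩ : ∃ t, s = t + 2 := ⟨s - 2, by omega⟩
  rw [Nat.add_sub_cancel, w_eq_neg_one_pow_mul_X1_zpow (by omega),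
    w_eq_neg_one_pow_mul_X1_zpow (by omega), add_right_comm, pow_add, neg_one_sq, mul_one,
    ← mul_assoc, ← ((Commute.neg_one_left _).pow_left _).eq, mul_assoc, mul_assoc]
  congr 1
  push_cast
  group
end

section
/- For all integers k ≥ 4 and l with 1 ≤ l ≤ k−3, the composite map t_{(2,2l−1)} ∘ t_{(2,2l−3)} ∘ ⋯ ∘ t_{(2,3)} ∘ t_{(2,1)} : ℤ² → ℤ² (where t_{(2,1)} is applied first) sends the vector (4k−10, 1) either to the vector (4k−10−4l, 4lk−4l²−10l+1) or to its negative. -/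
/-- The Picard–Lefschetz action on `H₁(T²;ℤ) ≅ ℤ²` of the right-handed Dehn twist
along the `(p,q)`-curve: `t_c(v₁,v₂) = (v₁ − (v₁q − v₂p)p, v₂ − (v₁q − v₂p)q)`. -/
def twist (c : ℤ × ℤ) (v : ℤ × ℤ) : ℤ × ℤ :=
  (v.1 - (v.1 * c.2 - v.2 * c.1) * c.1, v.2 - (v.1 * c.2 - v.2 * c.1) * c.2)

/-! With `m = 4k - 10`, the twist `t_{(2,2n+1)}` sends the point `(m - 4n, nm - 4n² + 1)` of a
quadratic curve to minus its successor at `n + 1`. Twists are linear, so the composite sends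
`(m, 1)`, the point at `n = 0`, to `(-1)^l` times the point at `l`. -/

lemma twist_smul (c : ℤ × ℤ) (s : ℤ) (v : ℤ × ℤ) : twist c (s • v) = s • twist c v := by
  simp only [twist, Prod.smul_fst, Prod.smul_snd, smul_eq_mul, Prod.smul_mk]
  ext <;> ring

lemma twist_two_odd (m n : ℤ) :
    twist (2, 2 * (n + 1) - 1) (m - 4 * n, n * m - 4 * n ^ 2 + 1)
      = -(m - 4 * (n + 1), (n + 1) * m - 4 * (n + 1) ^ 2 + 1) := by
  simp only [twist, Prod.neg_mk]
  ext <;> ring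

lemma foldl_twist_two_odd (m : ℤ) (l : ℕ) :
    (List.range l).foldl (fun v (j : ℕ) => twist (2, 2 * ((j : ℤ) + 1) - 1) v) (m, 1)
      = (-1) ^ l • (m - 4 * l, l * m - 4 * (l : ℤ) ^ 2 + 1) := by
  induction l with
  | zero => simp
  | succ n ih =>
    rw [List.range_succ, List.foldl_append, ih, List.foldl_cons, List.foldl_nil, twist_smul,
      twist_two_odd, pow_succ (-1 : ℤ) n, mul_neg_one, neg_smul, smul_neg]
    push_cast
    rfl

theorem twist_iterate_formula_one_general (k : ℤ) (l : ℕ) :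
    (List.range l).foldl (fun v j => twist (2, 2 * (j + 1 : ℤ) - 1) v) (4 * k - 10, 1)
        = (4 * k - 10 - 4 * l, 4 * l * k - 4 * l ^ 2 - 10 * l + 1) ∨
    (List.range l).foldl (fun v j => twist (2, 2 * (j + 1 : ℤ) - 1) v) (4 * k - 10, 1)
        = (-(4 * k - 10 - 4 * l), -(4 * l * k - 4 * l ^ 2 - 10 * l + 1)) := by
  have hsnd : (l : ℤ) * (4 * k - 10) - 4 * (l : ℤ) ^ 2 + 1 = 4 * l * k - 4 * l ^ 2 - 10 * l + 1 := by
    ring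
  -- `List.range l` is coerced to `List ℤ` through the list monad; turn it back into a `map`.
  simp only [bind_pure_comp, List.map_eq_map, List.foldl_map]
  rw [foldl_twist_two_odd, hsnd]
  rcases neg_one_pow_eq_or ℤ l with h | h
  · exact Or.inl (by rw [h, one_smul])
  · exact Or.inr (by rw [h, neg_one_smul, Prod.neg_mk])

/-- for all integers `k ≥ 4` and `1 ≤ l ≤ k-3`, the composite
`t_{(2,2l−1)} ∘ ⋯ ∘ t_{(2,1)}` (with `t_{(2,1)}` applied first) sends
`(4k−10, 1)` to `±(4k−10−4l, 4lk−4l²−10l+1)`. -/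
theorem twist_iterate_formula_one (k : ℤ) (hk : 4 ≤ k) (l : ℕ) (hl1 : 1 ≤ l)
    (hl2 : (l : ℤ) ≤ k - 3) :
    (List.range l).foldl (fun v j => twist (2, 2 * (j + 1 : ℤ) - 1) v) (4 * k - 10, 1)
        = (4 * k - 10 - 4 * l, 4 * l * k - 4 * l ^ 2 - 10 * l + 1) ∨
    (List.range l).foldl (fun v j => twist (2, 2 * (j + 1 : ℤ) - 1) v) (4 * k - 10, 1)
        = (-(4 * k - 10 - 4 * l), -(4 * l * k - 4 * l ^ 2 - 10 * l + 1)) :=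
  twist_iterate_formula_one_general k l
end

section
/- For every integer k ≥ 4, set G = T(2,1)·T(2,3)·T(2,5)⋯T(2,2k−7) ∈ SL(2,ℤ), the product of the matrices T(2,2l−1) for l = 1,…,k−3 with factors in increasing order of l from left to right. Then G⁻¹ · T(4k−10,1) · G = T(2,2k−5); that is, the conjugate of the Dehn-twist matrix T(4k−10,1) by the composition of the twists T_{2,1},…,T_{2,2k−7} is the Dehn-twist matrix T(2,2k−5). -/
/-- The matrix of the right-handed Dehn twist `T_{p,q}` along the `(p,q)`-curve:
rows `(1-pq, -q²)` and `(p², 1+pq)`. -/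
def Tmat (p q : ℤ) : SL2Z :=
  ⟨!![1 - p * q, -q ^ 2; p ^ 2, 1 + p * q], by rw [Matrix.det_fin_two_of]; ring⟩

/-!
Writing `u = (p, q)` and `J` for the rotation by a quarter turn, `T(p,q) = E + J u uᵀ`.
Since `Aᵀ J A = J` for `A ∈ SL(2,ℤ)`, conjugation moves the twist along the curve:
`A⁻¹ T(u) A = T(Aᵀ u)`. The product `G_n = T(2,1) T(2,3) ⋯ T(2,2n-1)` has the closed form
`(-1)ⁿ [[1, n], [-4n, 1-4n²]]`, and `G_nᵀ (4n+2, 1) = (-1)ⁿ (2, 2n+1)`.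
-/

open Matrix

theorem coe_Tmat (p q : ℤ) :
    (Tmat p q : Matrix (Fin 2) (Fin 2) ℤ) = !![1 - p * q, -q ^ 2; p ^ 2, 1 + p * q] :=
  rfl

theorem Tmat_neg (p q : ℤ) : Tmat (-p) (-q) = Tmat p q := by
  ext i j
  fin_cases i <;> fin_cases j <;> simp [coe_Tmat]

theorem inv_mul_Tmat_mul (A : SL2Z) (p q : ℤ) :
    A⁻¹ * Tmat p q * A = Tmat (A 0 0 * p + A 1 0 * q) (A 0 1 * p + A 1 1 * q) := by
  have hdet : A 0 0 * A 1 1 - A 0 1 * A 1 0 = 1 := by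
    rw [← det_fin_two, Matrix.SpecialLinearGroup.det_coe]
  ext i j
  rw [Matrix.SpecialLinearGroup.coe_mul, Matrix.SpecialLinearGroup.coe_mul,
    Matrix.SpecialLinearGroup.coe_inv, adjugate_fin_two, coe_Tmat, coe_Tmat]
  fin_cases i <;> fin_cases j <;> simp [mul_apply, Fin.sum_univ_two]
  · linear_combination hdet
  · ring
  · ring
  · linear_combination hdet

theorem coe_prod_Tmat_two_odd (n : ℕ) :
    (((List.range n).map (fun j => Tmat 2 (2 * (j + 1 : ℤ) - 1))).prod : SL2Z)
      = ((-1) ^ n • !![1, (n : ℤ); -(4 * n), 1 - 4 * n ^ 2] : Matrix (Fin 2) (Fin 2) ℤ) := by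
  simp only [bind_pure_comp, List.map_eq_map, List.map_map]
  induction n with
  | zero => simp [one_fin_two]
  | succ n ih =>
    rw [List.range_succ, List.map_append, List.prod_append, List.map_singleton,
      List.prod_singleton, Matrix.SpecialLinearGroup.coe_mul, ih, Function.comp_apply, coe_Tmat]
    ext i j
    fin_cases i <;> fin_cases j <;>
      simp [mul_apply, Fin.sum_univ_two, pow_succ] <;> ring

/-- for every integer `k ≥ 4`, with
`G = T(2,1)·T(2,3)⋯T(2,2k−7)` (factors in increasing order of `l`),
one has `G⁻¹ · T(4k−10,1) · G = T(2,2k−5)`. -/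
theorem conj_T_4k_sub_10 (k : ℕ) (hk : 4 ≤ k) :
    (((List.range (k - 3)).map (fun j => Tmat 2 (2 * (j + 1 : ℤ) - 1))).prod)⁻¹
        * Tmat (4 * (k : ℤ) - 10) 1
        * ((List.range (k - 3)).map (fun j => Tmat 2 (2 * (j + 1 : ℤ) - 1))).prod
      = Tmat 2 (2 * (k : ℤ) - 5) := by
  obtain ⟨n, rfl⟩ : ∃ n, k = n + 3 := ⟨k - 3, by omega⟩
  rw [Nat.add_sub_cancel, inv_mul_Tmat_mul, coe_prod_Tmat_two_odd]
  simp only [Matrix.smul_apply, of_apply, cons_val', cons_val_zero, cons_val_one, cons_val_fin_one,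
    smul_eq_mul]
  rcases neg_one_pow_eq_or ℤ n with h | h <;> rw [h]
  · congr 1 <;> push_cast <;> ring
  · rw [← Tmat_neg]
    congr 1 <;> push_cast <;> ring
end

section
/- Let d and n be integers with d ≠ 1, and suppose that in SL(2,ℤ) the product X₂·X₁^d·X₂ equals X₁ⁿ or −X₁ⁿ. Then d = 2 and n = −2; moreover X₂·X₁²·X₂ = −X₁⁻². (This is the algebraic core of the classification of genus-1 simplified broken Lefschetz fibrations with two Lefschetz singularities and Hurwitz system (X₁^{−n₁}X₂X₁^{n₁}, X₁^{−n₂}X₂X₁^{n₂}), with d = n₁ − n₂.) -/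
/-! Conjugating `T⁻¹` by `S` gives `X₁`, so `X₁ᵏ = !![1, 0; k, 1]` and
`X₂ X₁ᵈ X₂ = !![1 - d, d - 2; d, 1 - d]`. The matrices `±X₁ⁿ` are lower triangular with
diagonal `±1`, so comparing entries forces `d = 2`, the minus sign, and `n = -d`. -/

open Matrix.SpecialLinearGroup ModularGroup

lemma X2_eq_T_inv : X2 = T⁻¹ := Subtype.ext coe_T_inv.symm

lemma X1_eq_conj_T_inv : X1 = S * T⁻¹ * S⁻¹ := by
  ext i j; fin_cases i <;> fin_cases j <;> rfl

lemma coe_X1_zpow_s7 (k : ℤ) : ↑(X1 ^ k) = !![1, 0; k, 1] := by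
  rw [X1_eq_conj_T_inv, conj_zpow, inv_zpow, ← zpow_neg]
  simp [coe_T_zpow, S_inv]

lemma coe_negE : ↑negE = !![(-1 : ℤ), 0; 0, -1] := rfl

lemma coe_negE_mul_X1_zpow (n : ℤ) : ↑(negE * X1 ^ n) = !![-1, 0; -n, -1] := by
  simp [coe_negE, coe_X1_zpow_s7]

lemma coe_X2_mul_X1_zpow_mul_X2 (d : ℤ) :
    ↑(X2 * X1 ^ d * X2) = !![1 - d, d - 2; d, 1 - d] := by
  simp only [coe_mul, coe_X1_zpow_s7, X2_eq_T_inv, coe_T_inv, Matrix.mul_fin_two]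
  congrm !![?_, ?_; ?_, ?_] <;> ring

lemma X2_mul_X1_zpow_mul_X2_ne_X1_zpow (d n : ℤ) : X2 * X1 ^ d * X2 ≠ X1 ^ n := by
  intro h
  have hM := Subtype.ext_iff.mp h
  rw [coe_X2_mul_X1_zpow_mul_X2, coe_X1_zpow_s7, ← Matrix.ext_iff] at hM
  simp [Fin.forall_fin_two] at hM
  omega

lemma X2_mul_X1_zpow_mul_X2_eq_negE_mul_X1_zpow_iff (d n : ℤ) :
    X2 * X1 ^ d * X2 = negE * X1 ^ n ↔ d = 2 ∧ n = -2 := by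
  refine Subtype.ext_iff.trans ?_
  rw [coe_X2_mul_X1_zpow_mul_X2, coe_negE_mul_X1_zpow, ← Matrix.ext_iff]
  simp [Fin.forall_fin_two]
  omega

theorem two_singularities_case_general (d n : ℤ)
    (h : X2 * X1 ^ d * X2 = X1 ^ n ∨ X2 * X1 ^ d * X2 = negE * X1 ^ n) :
    d = 2 ∧ n = -2 ∧ X2 * X1 ^ (2 : ℤ) * X2 = negE * X1 ^ (-2 : ℤ) := by
  rcases h with h | h
  · exact absurd h (X2_mul_X1_zpow_mul_X2_ne_X1_zpow d n)
  · obtain ⟨rfl, rfl⟩ := (X2_mul_X1_zpow_mul_X2_eq_negE_mul_X1_zpow_iff d n).mp h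
    exact ⟨rfl, rfl, h⟩

/-- if `d ≠ 1` and `X₂·X₁^d·X₂ = ±X₁ⁿ` in `SL(2,ℤ)`, then `d = 2`
and `n = −2`; moreover `X₂·X₁²·X₂ = −X₁⁻²`. -/
theorem two_singularities_case (d n : ℤ) (hd : d ≠ 1)
    (h : X2 * X1 ^ d * X2 = X1 ^ n ∨ X2 * X1 ^ d * X2 = negE * X1 ^ n) :
    d = 2 ∧ n = -2 ∧ X2 * X1 ^ (2 : ℤ) * X2 = negE * X1 ^ (-2 : ℤ) :=
  two_singularities_case_general d n h
end

section
/- In SL(2,ℤ): for every integer d ≤ 0, X₂·X₁^d·X₂ = (BA)^{−d}·BA²·BA², and for every integer d ≥ 2, X₂·X₁^d·X₂ = A²·(BA²)^{d−2}·BA·BA². (These are the reduced-word expressions, in the generators a, b of PSL(2,ℤ) ≅ ℤ/3 ∗ ℤ/2, of the products arising from Hurwitz systems with two Lefschetz singularities.) -/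
/-- The matrix `A` with rows `(0,-1),(1,1)`. -/
def A : SL2Z := ⟨!![0, -1; 1, 1], by norm_num [Matrix.det_fin_two_of]⟩

/-- The matrix `B` with rows `(1,2),(-1,-1)`. -/
def B : SL2Z := ⟨!![1, 2; -1, -1], by norm_num [Matrix.det_fin_two_of]⟩

/-!
Both identities hold for every integer `d`: `X₁⁻¹` is conjugate to `BA` by `X₂ = BA²`, and `X₁`
is conjugate to `X₂` by the quarter-turn `S`. The conjugators are absorbed by the outer
factors `X₂`, since `X₂ S = A²` and `X₂² S⁻¹ = BA`.
-/

open ModularGroup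

lemma B_mul_A_sq : B * A ^ 2 = X2 := by decide

lemma X2_mul_X1_inv_mul_X2_inv : X2 * X1⁻¹ * X2⁻¹ = B * A := by decide

lemma S_mul_X2_mul_S_inv : S * X2 * S⁻¹ = X1 := by decide

lemma X2_mul_S : X2 * S = A ^ 2 := by decide

lemma X2_sq_mul_S_inv : X2 ^ 2 * S⁻¹ = B * A := by decide

lemma X2_mul_X1_zpow_mul_X2_eq_B_mul_A_zpow (d : ℤ) :
    X2 * X1 ^ d * X2 = (B * A) ^ (-d) * (B * A ^ 2) * (B * A ^ 2) := by
  rw [← X2_mul_X1_inv_mul_X2_inv, conj_zpow, inv_zpow', neg_neg, B_mul_A_sq]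
  group

lemma X2_mul_X1_zpow_mul_X2_eq_A_sq_mul (d : ℤ) :
    X2 * X1 ^ d * X2 = A ^ 2 * (B * A ^ 2) ^ (d - 2) * (B * A) * (B * A ^ 2) := by
  rw [B_mul_A_sq, ← S_mul_X2_mul_S_inv, conj_zpow, ← X2_sq_mul_S_inv, ← X2_mul_S]
  group

/-- in `SL(2,ℤ)`, for `d ≤ 0` one has
`X₂·X₁^d·X₂ = (BA)^{−d}·BA²·BA²`, and for `d ≥ 2` one has
`X₂·X₁^d·X₂ = A²·(BA²)^{d−2}·BA·BA²`. -/
theorem X2_X1_X2_reduced_word (d : ℤ) :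
    (d ≤ 0 → X2 * X1 ^ d * X2 = (B * A) ^ (-d) * (B * A ^ 2) * (B * A ^ 2)) ∧
    (2 ≤ d → X2 * X1 ^ d * X2 = A ^ 2 * (B * A ^ 2) ^ (d - 2) * (B * A) * (B * A ^ 2)) :=
  ⟨fun _ => X2_mul_X1_zpow_mul_X2_eq_B_mul_A_zpow d, fun _ => X2_mul_X1_zpow_mul_X2_eq_A_sq_mul d⟩
end
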